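/- Let p ≥ 1 and let 0 = k₀ < k₁ < ⋯ < k_p < k_{p+1} = n be integers, and set n_j = k_j − k_{j−1} for j = 1, …, p+1. Let a₁, …, a_{p+1} be pairwise distinct real numbers such that for all vectors m, m' of nonnegative integers of length p+1 with Σ_j m_j = Σ_j m'_j = n, the equality Σ_j a_j m_j = Σ_j a_j m'_j implies m = m'. Then the set of real symmetric n×n matrices X satisfying ∏_{j=1}^{p+1}(X − a_j I) = 0 and the single trace condition tr(X) = Σ_{j=1}^{p+1} n_j a_j is equal to { Q Λ_a Qᵀ : Q ∈ SO_n(ℝ) }, where Λ_a = diag(a₁·I_{n₁}, …, a_{p+1}·I_{n_{p+1}}). -/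

import Mathlib

open Matrix

/-- For `0 ≤ i < n`, the index `j ∈ {0, …, p}` of the block (determined by the boundaries
`k 0 < k 1 < ⋯ < k (p+1)`) containing `i`, i.e. the `j` with `k j ≤ i < k (j+1)`. -/
def blkIdx (k : ℕ → ℕ) (p i : ℕ) : ℕ :=
  ((Finset.range (p + 1)).filter fun j => k (j + 1) ≤ i).card

section aux
variable {n : ℕ}

/-- telescoping product for conjugation by an orthogonal matrix -/
lemma conj_list_prod (Q : Matrix (Fin n) (Fin n) ℝ) (hQ : Qᵀ * Q = 1)
    (L : List ℕ) (D : ℕ → Matrix (Fin n) (Fin n) ℝ) :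
    (L.map fun j => Q * D j * Qᵀ).prod = Q * (L.map D).prod * Qᵀ := by
  have hQ' : Q * Qᵀ = 1 := mul_eq_one_comm.mp hQ
  induction L with
  | nil => simp [hQ']
  | cons x xs ih =>
      simp only [List.map_cons, List.prod_cons, ih]
      calc Q * D x * Qᵀ * (Q * (List.map D xs).prod * Qᵀ)
          = Q * D x * (Qᵀ * Q) * ((List.map D xs).prod * Qᵀ) := by
            noncomm_ring
        _ = Q * (D x * (List.map D xs).prod) * Qᵀ := by rw [hQ]; noncomm_ring

lemma kmono (p : ℕ) (k : ℕ → ℕ) (hmono : ∀ j, j ≤ p → k j < k (j + 1)) :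
    ∀ s t, s < t → t ≤ p + 1 → k s < k t := by
  intro s t hst ht
  induction t with
  | zero => omega
  | succ t ih =>
      rcases Nat.lt_or_ge s t with h | h
      · exact (ih h (by omega)).trans (hmono t (by omega))
      · have : s = t := by omega
        subst this; exact hmono s (by omega)

lemma blkIdx_eq (p : ℕ) (k : ℕ → ℕ) (hmono : ∀ j, j ≤ p → k j < k (j + 1))
    {j i : ℕ} (hj : j ≤ p) (h1 : k j ≤ i) (h2 : i < k (j + 1)) :
    blkIdx k p i = j := by
  have hmono' := kmono p k hmono
  unfold blkIdx
  have : (Finset.range (p + 1)).filter (fun j' => k (j' + 1) ≤ i) = Finset.range j := by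
    ext j'
    simp only [Finset.mem_filter, Finset.mem_range]
    constructor
    · rintro ⟨hj', hle⟩
      by_contra hcon
      have : j ≤ j' := by omega
      have : k (j + 1) ≤ k (j' + 1) := by
        rcases Nat.eq_or_lt_of_le this with h | h
        · subst h; rfl
        · exact le_of_lt (hmono' _ _ (by omega) (by omega))
      omega
    · intro hlt
      refine ⟨by omega, ?_⟩
      have : k (j' + 1) ≤ k j := by
        rcases Nat.eq_or_lt_of_le (show j' + 1 ≤ j by omega) with h | h
        · rw [h]
        · exact le_of_lt (hmono' _ _ h (by omega))
      omega
  rw [this, Finset.card_range]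

lemma blkIdx_le (p : ℕ) (k : ℕ → ℕ) (hk0 : k 0 = 0)
    (hmono : ∀ j, j ≤ p → k j < k (j + 1)) {i : ℕ} (hi : i < k (p + 1)) :
    blkIdx k p i ≤ p ∧ k (blkIdx k p i) ≤ i ∧ i < k (blkIdx k p i + 1) := by
  -- find the block containing i
  have hex : ∃ j, j ≤ p ∧ k j ≤ i ∧ i < k (j + 1) := by
    induction p with
    | zero => exact ⟨0, le_refl _, by omega, by simpa using hi⟩
    | succ q ih =>
        rcases Nat.lt_or_ge i (k (q + 1)) with h | h
        · obtain ⟨j, hj, h1, h2⟩ := ih (fun j hj => hmono j (by omega)) h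
          exact ⟨j, by omega, h1, h2⟩
        · exact ⟨q + 1, le_refl _, h, hi⟩
  obtain ⟨j, hj, h1, h2⟩ := hex
  rw [blkIdx_eq p k hmono hj h1 h2]
  exact ⟨hj, h1, h2⟩

lemma sum_blocks (p : ℕ) (k : ℕ → ℕ) (hk0 : k 0 = 0)
    (hmono : ∀ j, j ≤ p → k j ≤ k (j + 1)) (f : ℕ → ℝ) :
    ∀ q, q ≤ p + 1 →
      ∑ i ∈ Finset.range (k q), f i
        = ∑ j ∈ Finset.range q, ∑ i ∈ Finset.Ico (k j) (k (j + 1)), f i := by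
  intro q hq
  induction q with
  | zero => simp [hk0]
  | succ q ih =>
      rw [Finset.sum_range_succ, ← ih (by omega), Finset.range_eq_Ico, Finset.range_eq_Ico]
      exact (Finset.sum_Ico_consecutive f (Nat.zero_le _) (hmono q (by omega))).symm


lemma orth_conj_sub_smul {n : ℕ} (Q M : Matrix (Fin n) (Fin n) ℝ) (hQ' : Q * Qᵀ = 1) (c : ℝ) :
    Q * M * Qᵀ - c • 1 = Q * (M - c • 1) * Qᵀ := by
  rw [Matrix.mul_sub, Matrix.sub_mul]
  congr 1
  rw [Matrix.mul_smul, mul_one, Matrix.smul_mul, hQ']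

lemma diag_list_prod {n : ℕ} (L : List ℕ) (g : ℕ → (Fin n) → ℝ) :
    (L.map fun j => Matrix.diagonal (g j)).prod = Matrix.diagonal ((L.map g).prod) := by
  have := map_list_prod (Matrix.diagonalRingHom (Fin n) ℝ) (L.map g)
  simp only [List.map_map] at this
  exact this.symm

lemma pi_list_prod {n : ℕ} (L : List (Fin n → ℝ)) (i : Fin n) :
    L.prod i = (L.map fun f => f i).prod := by
  have := map_list_prod (Pi.evalRingHom (fun _ : Fin n => ℝ) i) L
  exact this

lemma ksum (p : ℕ) (k : ℕ → ℕ) (hk0 : k 0 = 0) (hmono : ∀ j, j ≤ p → k j < k (j + 1)) :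
    ∀ q, q ≤ p + 1 → ∑ j ∈ Finset.range q, (k (j + 1) - k j) = k q := by
  intro q hq
  induction q with
  | zero => simpa using hk0.symm
  | succ q ih =>
      rw [Finset.sum_range_succ, ih (by omega)]
      have := hmono q (by omega)
      omega

lemma card_blk_fiber (p n : ℕ) (k : ℕ → ℕ) (hk0 : k 0 = 0) (hkn : k (p + 1) = n)
    (hmono : ∀ j, j ≤ p → k j < k (j + 1)) {j : ℕ} (hj : j ≤ p) :
    (Finset.univ.filter fun i : Fin n => blkIdx k p (i : ℕ) = j).card = k (j + 1) - k j := by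
  have hkj : k (j + 1) ≤ n := by
    rcases Nat.eq_or_lt_of_le (show j + 1 ≤ p + 1 by omega) with h | h
    · rw [h, hkn]
    · exact le_of_lt (by rw [← hkn]; exact kmono p k hmono _ _ h (le_refl _))
  rw [← Nat.card_Ico]
  apply Finset.card_bij (fun (i : Fin n) _ => (i : ℕ))
  · intro i hi
    simp only [Finset.mem_filter, Finset.mem_univ, true_and] at hi
    have := blkIdx_le p k hk0 hmono (i := (i : ℕ)) (by rw [hkn]; exact i.2)
    rw [hi] at this
    simp only [Finset.mem_Ico]
    exact ⟨this.2.1, this.2.2⟩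
  · intro i _ i' _ h
    exact Fin.val_injective h
  · intro x hx
    simp only [Finset.mem_Ico] at hx
    refine ⟨⟨x, by omega⟩, ?_, rfl⟩
    simp only [Finset.mem_filter, Finset.mem_univ, true_and]
    exact blkIdx_eq p k hmono hj hx.1 hx.2

lemma trace_diag_blk (p n : ℕ) (k : ℕ → ℕ) (hk0 : k 0 = 0) (hkn : k (p + 1) = n)
    (hmono : ∀ j, j ≤ p → k j < k (j + 1)) (a : ℕ → ℝ) :
    ∑ i : Fin n, a (blkIdx k p (i : ℕ))
      = ∑ j ∈ Finset.range (p + 1), ((k (j + 1) - k j : ℕ) : ℝ) * a j := by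
  rw [← Finset.sum_range (fun i => a (blkIdx k p i)), ← hkn,
    sum_blocks p k hk0 (fun j hj => le_of_lt (hmono j hj)) _ (p + 1) (le_refl _)]
  apply Finset.sum_congr rfl
  intro j hj
  simp only [Finset.mem_range] at hj
  have hcongr : ∀ i ∈ Finset.Ico (k j) (k (j + 1)), a (blkIdx k p i) = a j := by
    intro i hi
    simp only [Finset.mem_Ico] at hi
    rw [blkIdx_eq p k hmono (by omega) hi.1 hi.2]
  rw [Finset.sum_congr rfl hcongr, Finset.sum_const, Nat.card_Ico, nsmul_eq_mul]

end aux

theorem stmt3 (p n : ℕ) (hp : 1 ≤ p) (k : ℕ → ℕ) (hk0 : k 0 = 0) (hkn : k (p + 1) = n)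
    (hmono : ∀ j, j ≤ p → k j < k (j + 1))
    (a : ℕ → ℝ) (ha : ∀ i j, i ≤ p → j ≤ p → i ≠ j → a i ≠ a j)
    (hgen : ∀ m m' : ℕ → ℕ,
      (∑ j ∈ Finset.range (p + 1), m j = n) → (∑ j ∈ Finset.range (p + 1), m' j = n) →
      (∑ j ∈ Finset.range (p + 1), a j * m j) = (∑ j ∈ Finset.range (p + 1), a j * m' j) →
      ∀ j, j ≤ p → m j = m' j) :
    {X : Matrix (Fin n) (Fin n) ℝ | X.IsSymm ∧
        ((List.range (p + 1)).map fun j => X - a j • 1).prod = 0 ∧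
        X.trace = ∑ j ∈ Finset.range (p + 1), ((k (j + 1) - k j : ℕ) : ℝ) * a j} =
      {Y : Matrix (Fin n) (Fin n) ℝ | ∃ Q : Matrix (Fin n) (Fin n) ℝ,
        Qᵀ * Q = 1 ∧ Q.det = 1 ∧
        Y = Q * Matrix.diagonal (fun i : Fin n => a (blkIdx k p i)) * Qᵀ} := by
  have hn : 0 < n := by
    have := kmono p k hmono 0 (p + 1) (by omega) (le_refl _)
    omega
  ext X
  simp only [Set.mem_setOf_eq]
  constructor
  · intro ⟨hsym, hprod, htr⟩
    have hH : X.IsHermitian := by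
      rw [Matrix.IsHermitian, Matrix.conjTranspose_eq_transpose_of_trivial]; exact hsym
    set U : Matrix (Fin n) (Fin n) ℝ := (hH.eigenvectorUnitary : Matrix (Fin n) (Fin n) ℝ)
      with hUdef
    set d : Fin n → ℝ := hH.eigenvalues with hd
    have hstar : star U = Uᵀ := by
      rw [Matrix.star_eq_conjTranspose, Matrix.conjTranspose_eq_transpose_of_trivial]
    have hUo : Uᵀ * U = 1 := by
      rw [← hstar]
      exact Matrix.mem_unitaryGroup_iff'.mp hH.eigenvectorUnitary.2
    have hUo' : U * Uᵀ = 1 := mul_eq_one_comm.mp hUo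
    have hspec : X = U * Matrix.diagonal d * Uᵀ := by
      have h := hH.spectral_theorem
      rw [RCLike.ofReal_real_eq_id] at h
      rw [Unitary.conjStarAlgAut_apply, ← hUdef, hstar] at h
      simpa using h
    -- the diagonal product vanishes
    have hdprod : ∀ i : Fin n, ((List.range (p + 1)).map fun j => d i - a j).prod = 0 := by
      have h1 : ((List.range (p + 1)).map fun j => X - a j • (1 : Matrix (Fin n) (Fin n) ℝ)).prod
          = U * Matrix.diagonal (((List.range (p + 1)).map fun j (i : Fin n) => d i - a j).prod)
            * Uᵀ := by
        have hfun : (fun j => X - a j • (1 : Matrix (Fin n) (Fin n) ℝ))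
            = fun j => U * (Matrix.diagonal d - a j • 1) * Uᵀ := by
          funext j
          rw [← orth_conj_sub_smul U _ hUo' (a j), ← hspec]
        have hdiagj : (fun j => Matrix.diagonal d - a j • (1 : Matrix (Fin n) (Fin n) ℝ))
            = fun j => Matrix.diagonal (fun i : Fin n => d i - a j) := by
          funext j
          rw [Matrix.smul_one_eq_diagonal, Matrix.diagonal_sub]
        rw [hfun, conj_list_prod U hUo, hdiagj, diag_list_prod]
      rw [hprod] at h1
      have h2 : Matrix.diagonal (((List.range (p + 1)).map fun j (i : Fin n) => d i - a j).prod)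
          = 0 := by
        have := congrArg (fun M => Uᵀ * M * U) h1
        simp only [Matrix.mul_zero, Matrix.zero_mul] at this
        rw [← Matrix.mul_assoc, ← Matrix.mul_assoc, hUo, Matrix.one_mul, Matrix.mul_assoc,
          hUo, Matrix.mul_one] at this
        exact this.symm
      intro i
      have h3 := congrArg (fun M : Matrix (Fin n) (Fin n) ℝ => M i i) h2
      simp only [Matrix.diagonal_apply_eq, Matrix.zero_apply] at h3
      rw [pi_list_prod, List.map_map] at h3
      exact h3
    have hroot : ∀ i : Fin n, ∃ j, j ≤ p ∧ d i = a j := by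
      intro i
      obtain ⟨j, hj, hji⟩ := List.mem_map.mp (List.prod_eq_zero_iff.mp (hdprod i))
      exact ⟨j, Nat.lt_succ_iff.mp (List.mem_range.mp hj), sub_eq_zero.mp hji⟩
    choose f hfle hfval using hroot
    set m : ℕ → ℕ := fun j => (Finset.univ.filter fun i : Fin n => f i = j).card with hm
    have hmaps : ∀ i : Fin n, i ∈ Finset.univ → f i ∈ Finset.range (p + 1) := by
      intro i _; exact Finset.mem_range.mpr (Nat.lt_succ_of_le (hfle i))
    have hsum_m : ∑ j ∈ Finset.range (p + 1), m j = n := by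
      rw [hm, ← Finset.card_eq_sum_card_fiberwise hmaps, Finset.card_univ, Fintype.card_fin]
    have htrX : X.trace = ∑ i : Fin n, d i := by
      rw [hspec, Matrix.trace_mul_cycle, hUo, Matrix.one_mul, Matrix.trace_diagonal]
    have hsum_a : ∑ j ∈ Finset.range (p + 1), a j * (m j : ℝ) = ∑ i : Fin n, d i := by
      rw [← Finset.sum_fiberwise_of_maps_to hmaps (fun i => d i)]
      apply Finset.sum_congr rfl
      intro j hj
      have : ∀ i ∈ Finset.univ.filter fun i : Fin n => f i = j, d i = a j := by
        intro i hi
        simp only [Finset.mem_filter, Finset.mem_univ, true_and] at hi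
        rw [hfval i, hi]
      rw [Finset.sum_congr rfl this, Finset.sum_const, nsmul_eq_mul, mul_comm, hm]
    have hm_eq : ∀ j, j ≤ p → m j = k (j + 1) - k j := by
      apply hgen m (fun j => k (j + 1) - k j) hsum_m (by rw [ksum p k hk0 hmono (p + 1) le_rfl, hkn])
      rw [hsum_a, ← htrX, htr]
      apply Finset.sum_congr rfl
      intro j _
      ring
    have hcard : ∀ c : ℕ, Fintype.card {i : Fin n // blkIdx k p (i : ℕ) = c}
        = Fintype.card {i : Fin n // f i = c} := by
      intro c
      rw [Fintype.card_subtype, Fintype.card_subtype]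
      rcases le_or_gt c p with hc | hc
      · rw [card_blk_fiber p n k hk0 hkn hmono hc, ← hm_eq c hc, hm]
      · rw [Finset.filter_false_of_mem, Finset.filter_false_of_mem]
        · intro i _
          have := hfle i; omega
        · intro i _
          have := (blkIdx_le p k hk0 hmono (i := (i : ℕ)) (by rw [hkn]; exact i.2)).1
          omega
    have e : ∀ c : ℕ, {i : Fin n // blkIdx k p (i : ℕ) = c} ≃ {i : Fin n // f i = c} :=
      fun c => Fintype.equivOfCardEq (hcard c)
    set σ : Fin n ≃ Fin n := Equiv.ofFiberEquiv e with hσ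
    have hdσ : ∀ i : Fin n, d (σ i) = a (blkIdx k p (i : ℕ)) := by
      intro i
      rw [hfval (σ i), Equiv.ofFiberEquiv_map e i]
    set Q1 : Matrix (Fin n) (Fin n) ℝ := U.submatrix id ⇑σ with hQ1
    have hQ1T : Q1ᵀ = Uᵀ.submatrix ⇑σ id := by rw [hQ1, Matrix.transpose_submatrix]
    have hQ1o : Q1ᵀ * Q1 = 1 := by
      ext i j
      have h2 : (Uᵀ * U) (σ i) (σ j) = (1 : Matrix (Fin n) (Fin n) ℝ) (σ i) (σ j) := by
        rw [hUo]
      simp only [Matrix.mul_apply, Matrix.one_apply, Matrix.transpose_apply] at h2 ⊢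
      simp only [hQ1, Matrix.submatrix_apply, id_eq]
      rw [h2]
      simp [Equiv.apply_eq_iff_eq]
    have hXeq : Q1 * Matrix.diagonal (fun i : Fin n => a (blkIdx k p (i : ℕ))) * Q1ᵀ = X := by
      have hdiag : Matrix.diagonal (fun i : Fin n => a (blkIdx k p (i : ℕ)))
          = (Matrix.diagonal d).submatrix ⇑σ ⇑σ := by
        have hfun2 : (fun i : Fin n => a (blkIdx k p (i : ℕ))) = d ∘ ⇑σ := by
          funext i; exact (hdσ i).symm
        rw [Matrix.submatrix_diagonal_equiv, hfun2]
      rw [hdiag, hQ1, hQ1T]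
      simp only [Matrix.submatrix_mul_equiv, Matrix.submatrix_id_id]
      exact hspec.symm
    have hdet1 : Q1.det * Q1.det = 1 := by
      have h := congrArg Matrix.det hQ1o
      rwa [Matrix.det_mul, Matrix.det_transpose, Matrix.det_one] at h
    rcases mul_self_eq_one_iff.mp hdet1 with h1 | h1
    · exact ⟨Q1, hQ1o, h1, hXeq.symm⟩
    · set sgn : Fin n → ℝ := fun i => if i = ⟨0, hn⟩ then -1 else 1 with hsgn
      set S : Matrix (Fin n) (Fin n) ℝ := Matrix.diagonal sgn with hS
      have hSS : S * S = 1 := by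
        have hfun3 : (fun i : Fin n => sgn i * sgn i) = fun _ => (1 : ℝ) := by
          funext i; simp only [hsgn]; split <;> norm_num
        rw [hS, Matrix.diagonal_mul_diagonal, hfun3, Matrix.diagonal_one]
      have hST : Sᵀ = S := by rw [hS, Matrix.diagonal_transpose]
      have hdetS : S.det = -1 := by
        rw [hS, Matrix.det_diagonal]
        simp only [hsgn]
        rw [Finset.prod_ite_eq' Finset.univ (⟨0, hn⟩ : Fin n) (fun _ => (-1 : ℝ))]
        simp
      refine ⟨Q1 * S, ?_, ?_, ?_⟩
      · rw [Matrix.transpose_mul, hST]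
        calc S * Q1ᵀ * (Q1 * S) = S * (Q1ᵀ * Q1) * S := by noncomm_ring
          _ = 1 := by rw [hQ1o, Matrix.mul_one, hSS]
      · rw [Matrix.det_mul, h1, hdetS]; norm_num
      · have hSΛ : S * Matrix.diagonal (fun i : Fin n => a (blkIdx k p (i : ℕ))) * S
            = Matrix.diagonal (fun i : Fin n => a (blkIdx k p (i : ℕ))) := by
          have hfun4 : (fun i : Fin n => sgn i * a (blkIdx k p (i : ℕ)) * sgn i)
              = fun i : Fin n => a (blkIdx k p (i : ℕ)) := by
            funext i; simp only [hsgn]; split <;> ring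
          rw [hS, Matrix.diagonal_mul_diagonal, Matrix.diagonal_mul_diagonal, hfun4]
        rw [Matrix.transpose_mul, hST]
        calc X = Q1 * Matrix.diagonal (fun i : Fin n => a (blkIdx k p (i : ℕ))) * Q1ᵀ :=
              hXeq.symm
          _ = Q1 * (S * Matrix.diagonal (fun i : Fin n => a (blkIdx k p (i : ℕ))) * S) * Q1ᵀ := by
              rw [hSΛ]
          _ = Q1 * S * Matrix.diagonal (fun i : Fin n => a (blkIdx k p (i : ℕ))) * (S * Q1ᵀ) := by
              noncomm_ring
  · rintro ⟨Q, hQ, hdet, rfl⟩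
    have hQ' : Q * Qᵀ = 1 := mul_eq_one_comm.mp hQ
    set Λ : Matrix (Fin n) (Fin n) ℝ := Matrix.diagonal (fun i : Fin n => a (blkIdx k p i))
      with hΛ
    refine ⟨?_, ?_, ?_⟩
    · show (Q * Λ * Qᵀ)ᵀ = Q * Λ * Qᵀ
      rw [Matrix.transpose_mul, Matrix.transpose_mul, Matrix.transpose_transpose,
        hΛ, Matrix.diagonal_transpose, Matrix.mul_assoc]
    · have hfun : (fun j => Q * Λ * Qᵀ - a j • (1 : Matrix (Fin n) (Fin n) ℝ))
          = fun j => Q * (Λ - a j • 1) * Qᵀ := by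
        funext j
        exact orth_conj_sub_smul Q Λ hQ' (a j)
      rw [hfun, conj_list_prod Q hQ]
      have hdiagj : (fun j => Λ - a j • (1 : Matrix (Fin n) (Fin n) ℝ))
          = fun j => Matrix.diagonal (fun i : Fin n => a (blkIdx k p i) - a j) := by
        funext j
        rw [hΛ, Matrix.smul_one_eq_diagonal, Matrix.diagonal_sub]
      rw [hdiagj, diag_list_prod]
      have : ((List.range (p + 1)).map fun j (i : Fin n) => a (blkIdx k p (i : ℕ)) - a j).prod
          = (0 : Fin n → ℝ) := by
        funext i
        rw [show ((0 : Fin n → ℝ) i) = 0 from rfl, pi_list_prod]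
        apply List.prod_eq_zero
        simp only [List.map_map]
        refine List.mem_map.mpr ⟨blkIdx k p (i : ℕ), ?_, ?_⟩
        · refine List.mem_range.mpr ?_
          have := (blkIdx_le p k hk0 hmono (i := (i : ℕ)) (by rw [hkn]; exact i.2)).1
          omega
        · simp
      rw [this, show Matrix.diagonal (0 : Fin n → ℝ) = 0 from Matrix.diagonal_zero,
        Matrix.mul_zero, Matrix.zero_mul]
    · rw [Matrix.trace_mul_cycle, hQ, Matrix.one_mul, hΛ, Matrix.trace_diagonal]
      exact trace_diag_blk p n k hk0 hkn hmono a
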